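/- arXiv:2206.07159 — 3 statements merged into one kernel-verified Lean document; each statement's English description precedes it below -/
import Mathlib

section
/- For every Hurst parameter H ∈ (0,1), the kernel R_H is positive semidefinite on [0,∞): for every n ∈ ℕ, all points t_1, …, t_n ∈ [0,∞) and all real numbers c_1, …, c_n, one has Σ_{i=1}^{n} Σ_{j=1}^{n} c_i c_j R_H(t_i, t_j) ≥ 0. -/
/-!
For `1 < p < 3` the integral `∫₀^∞ (1 - cos (x ξ)) ξ^(-p) dξ` converges, and the substitution
`u = |x| ξ` shows that it equals `|x|^(p-1)` times a positive constant. Taking `p = 2H + 1`, this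
writes `2 R_H(s, t)` as a positive multiple of the integral against `ξ^(-p) dξ` of
`(1 - cos sξ) + (1 - cos tξ) - (1 - cos (s - t)ξ) = Re ((1 - e^{isξ}) (1 - e^{-itξ}))`,
and for each fixed `ξ` this kernel is positive semidefinite, since its quadratic form is
`|∑ cᵢ (1 - e^{itᵢξ})|²`.
-/

open MeasureTheory Real Set

namespace FractionalBrownianMotion

section CosineKernel

variable {ι : Type*} [Fintype ι]

theorem sum_sum_mul_one_sub_cos (a c : ι → ℝ) :
    ∑ i, ∑ j, c i * c j * ((1 - cos (a i)) + (1 - cos (a j)) - (1 - cos (a i - a j))) =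
      (∑ i, c i * (1 - cos (a i))) ^ 2 + (∑ i, c i * sin (a i)) ^ 2 := by
  simp only [sq, Finset.sum_mul_sum, ← Finset.sum_add_distrib, cos_sub]
  refine Finset.sum_congr rfl fun i _ => Finset.sum_congr rfl fun j _ => ?_
  ring

theorem sum_sum_mul_integral_one_sub_cos_nonneg {μ : Measure ℝ} {w : ℝ → ℝ} (hw : 0 ≤ᵐ[μ] w)
    (hint : ∀ x, Integrable (fun ξ => (1 - cos (x * ξ)) * w ξ) μ) {ψ : ℝ → ℝ}
    (hψ : ∀ x, ψ x = ∫ ξ, (1 - cos (x * ξ)) * w ξ ∂μ) (t c : ι → ℝ) :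
    0 ≤ ∑ i, ∑ j, c i * c j * (ψ (t i) + ψ (t j) - ψ (t i - t j)) := by
  set g : ι → ι → ℝ → ℝ := fun i j ξ => c i * c j *
    ((1 - cos (t i * ξ)) * w ξ + (1 - cos (t j * ξ)) * w ξ - (1 - cos ((t i - t j) * ξ)) * w ξ)
  have hg : ∀ i j, Integrable (g i j) μ := fun i j =>
    (((hint _).add (hint _)).sub (hint _)).const_mul _
  have hgψ : ∀ i j, ∫ ξ, g i j ξ ∂μ = c i * c j * (ψ (t i) + ψ (t j) - ψ (t i - t j)) := by
    intro i j
    rw [integral_const_mul, integral_sub (by exact (hint _).add (hint _)) (hint _),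
      integral_add (hint _) (hint _), hψ, hψ, hψ]
  have hg_nonneg : 0 ≤ᵐ[μ] fun ξ => ∑ i, ∑ j, g i j ξ := by
    filter_upwards [hw] with ξ hξ
    have hsq := sum_sum_mul_one_sub_cos (fun i => t i * ξ) c
    simp only [← sub_mul] at hsq
    calc (0 : ℝ) ≤ ((∑ i, c i * (1 - cos (t i * ξ))) ^ 2 + (∑ i, c i * sin (t i * ξ)) ^ 2) * w ξ :=
          mul_nonneg (by positivity) hξ
      _ = ∑ i, ∑ j, g i j ξ := by
          rw [← hsq, Finset.sum_mul]
          refine Finset.sum_congr rfl fun i _ => ?_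
          rw [Finset.sum_mul]
          refine Finset.sum_congr rfl fun j _ => ?_
          simp only [g]; ring
  calc 0 ≤ ∫ ξ, ∑ i, ∑ j, g i j ξ ∂μ := integral_nonneg_of_ae hg_nonneg
    _ = _ := by
      rw [integral_finsetSum _ fun i _ => integrable_finsetSum _ fun j _ => hg i j]
      simp only [integral_finsetSum _ fun j _ => hg _ j, hgψ]

end CosineKernel

noncomputable def oneSubCosTransform (p x : ℝ) : ℝ := ∫ ξ in Ioi 0, (1 - cos (x * ξ)) * ξ ^ (-p)

section OneSubCosTransform

variable {p : ℝ}

theorem integrableOn_one_sub_cos_mul_rpow_Ioc (hp : p < 3) (x : ℝ) :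
    IntegrableOn (fun ξ => (1 - cos (x * ξ)) * ξ ^ (-p)) (Ioc 0 1) := by
  have hbound : IntegrableOn (fun ξ : ℝ => x ^ 2 / 2 * ξ ^ (2 - p)) (Ioc 0 1) :=
    (intervalIntegral.intervalIntegrable_rpow' (a := 0) (b := 1) (by linarith)).1.const_mul _
  refine hbound.mono' (by fun_prop) ?_
  filter_upwards [ae_restrict_mem measurableSet_Ioc] with ξ hξ
  have h1 := one_sub_sq_div_two_le_cos (x := x * ξ)
  rw [norm_of_nonneg (mul_nonneg (sub_nonneg.2 (cos_le_one _)) (rpow_nonneg hξ.1.le _)),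
    sub_eq_add_neg 2, rpow_add hξ.1, rpow_two]
  calc (1 - cos (x * ξ)) * ξ ^ (-p) ≤ (x * ξ) ^ 2 / 2 * ξ ^ (-p) :=
        mul_le_mul_of_nonneg_right (by linarith) (rpow_nonneg hξ.1.le _)
    _ = _ := by ring

theorem integrableOn_one_sub_cos_mul_rpow_Ioi (hp : 1 < p) (x : ℝ) :
    IntegrableOn (fun ξ => (1 - cos (x * ξ)) * ξ ^ (-p)) (Ioi 1) := by
  have hbound : IntegrableOn (fun ξ : ℝ => 2 * ξ ^ (-p)) (Ioi 1) :=
    (integrableOn_Ioi_rpow_of_lt (by linarith) one_pos).const_mul 2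
  refine hbound.mono' (by fun_prop) ?_
  filter_upwards [ae_restrict_mem measurableSet_Ioi] with ξ hξ
  have hξ0 : 0 < ξ := one_pos.trans hξ
  rw [norm_of_nonneg (mul_nonneg (sub_nonneg.2 (cos_le_one _)) (rpow_nonneg hξ0.le _))]
  gcongr
  linarith [neg_one_le_cos (x * ξ)]

theorem integrableOn_one_sub_cos_mul_rpow (hp1 : 1 < p) (hp3 : p < 3) (x : ℝ) :
    IntegrableOn (fun ξ => (1 - cos (x * ξ)) * ξ ^ (-p)) (Ioi 0) := by
  rw [← Ioc_union_Ioi_eq_Ioi zero_le_one]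
  exact (integrableOn_one_sub_cos_mul_rpow_Ioc hp3 x).union
    (integrableOn_one_sub_cos_mul_rpow_Ioi hp1 x)

theorem oneSubCosTransform_zero : oneSubCosTransform p 0 = 0 := by
  simp [oneSubCosTransform]

theorem oneSubCosTransform_neg (x : ℝ) : oneSubCosTransform p (-x) = oneSubCosTransform p x := by
  simp only [oneSubCosTransform, neg_mul, cos_neg]

theorem oneSubCosTransform_of_pos {x : ℝ} (hx : 0 < x) :
    oneSubCosTransform p x = x ^ (p - 1) * oneSubCosTransform p 1 := by
  have hsubst : EqOn (fun ξ => (1 - cos (x * ξ)) * ξ ^ (-p))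
      (fun ξ => x ^ p * ((1 - cos (x * ξ)) * (x * ξ) ^ (-p))) (Ioi 0) := fun ξ hξ => by
    simp only [mul_rpow hx.le (le_of_lt hξ), rpow_neg hx.le]
    field_simp
  rw [oneSubCosTransform, setIntegral_congr_fun measurableSet_Ioi hsubst, integral_const_mul,
    integral_comp_mul_left_Ioi (fun u => (1 - cos u) * u ^ (-p)) 0 hx, mul_zero, smul_eq_mul,
    rpow_sub_one hx.ne', oneSubCosTransform]
  ring_nf

theorem oneSubCosTransform_eq (hp : 1 < p) (x : ℝ) :
    oneSubCosTransform p x = |x| ^ (p - 1) * oneSubCosTransform p 1 := by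
  rcases (abs_nonneg x).eq_or_lt with h | h
  · rw [← h, zero_rpow (by linarith), zero_mul, abs_eq_zero.1 h.symm, oneSubCosTransform_zero]
  · rw [← oneSubCosTransform_of_pos h]
    rcases abs_choice x with hx | hx <;> rw [hx]
    exact (oneSubCosTransform_neg x).symm

theorem oneSubCosTransform_one_pos (hp1 : 1 < p) (hp3 : p < 3) : 0 < oneSubCosTransform p 1 := by
  have hpos : ∀ ξ ∈ Ioi (0 : ℝ), 0 ≤ (1 - cos ξ) * ξ ^ (-p) := fun ξ hξ =>
    mul_nonneg (sub_nonneg.2 (cos_le_one _)) (rpow_nonneg (le_of_lt hξ) _)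
  have hint := integrableOn_one_sub_cos_mul_rpow hp1 hp3 1
  simp only [one_mul] at hint
  simp only [oneSubCosTransform, one_mul]
  rw [setIntegral_pos_iff_support_of_nonneg_ae
    ((ae_restrict_iff' measurableSet_Ioi).2 (ae_of_all _ hpos)) hint]
  have hsupp : Ioo 0 π ⊆ Function.support (fun ξ : ℝ => (1 - cos ξ) * ξ ^ (-p)) ∩ Ioi 0 :=
    fun ξ hξ => by
      have hcos : cos ξ < cos 0 := cos_lt_cos_of_nonneg_of_le_pi le_rfl hξ.2.le hξ.1
      rw [cos_zero] at hcos
      exact ⟨mul_ne_zero (sub_ne_zero.2 hcos.ne') (rpow_pos_of_pos hξ.1 _).ne', hξ.1⟩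
  refine lt_of_lt_of_le ?_ (measure_mono hsupp)
  simp [pi_pos]

end OneSubCosTransform

end FractionalBrownianMotion

open FractionalBrownianMotion

/-- For every Hurst parameter `H ∈ (0,1)`, the covariance kernel
`R_H(t,s) = (1/2)(s^(2H) + t^(2H) - |t-s|^(2H))` is positive semidefinite on `[0,∞)`:
for all points `t_1, …, t_n ∈ [0,∞)` and reals `c_1, …, c_n` one has
`∑ i ∑ j, c i * c j * R_H (t i) (t j) ≥ 0`. -/
theorem fBm_covariance_posSemidef
    (H : ℝ) (hH : H ∈ Set.Ioo (0 : ℝ) 1)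
    (R : ℝ → ℝ → ℝ)
    (hR : ∀ t s : ℝ, R t s = (1 / 2) * (s ^ (2 * H) + t ^ (2 * H) - |t - s| ^ (2 * H)))
    (n : ℕ) (t : Fin n → ℝ) (ht : ∀ i, 0 ≤ t i) (c : Fin n → ℝ) :
    0 ≤ ∑ i : Fin n, ∑ j : Fin n, c i * c j * R (t i) (t j) := by
  obtain ⟨hH0, hH1⟩ := hH
  set ψ := oneSubCosTransform (2 * H + 1)
  have hK : 0 < ψ 1 := oneSubCosTransform_one_pos (by linarith) (by linarith)
  have habs : ∀ x, |x| ^ (2 * H) = ψ x / ψ 1 := fun x => by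
    have hψ : ψ x = |x| ^ (2 * H + 1 - 1) * ψ 1 := oneSubCosTransform_eq (by linarith) x
    rw [hψ, add_sub_cancel_right, mul_div_cancel_right₀ _ hK.ne']
  have hpow : ∀ i, t i ^ (2 * H) = ψ (t i) / ψ 1 := fun i => by rw [← habs, abs_of_nonneg (ht i)]
  have hRψ : ∀ i j, R (t i) (t j) = (2 * ψ 1)⁻¹ * (ψ (t i) + ψ (t j) - ψ (t i - t j)) := by
    intro i j
    rw [hR, hpow, hpow, habs]
    field_simp
    ring
  simp only [hRψ, mul_left_comm _ (2 * ψ 1)⁻¹, ← Finset.mul_sum]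
  exact mul_nonneg (by positivity) <| sum_sum_mul_integral_one_sub_cos_nonneg
    ((ae_restrict_iff' measurableSet_Ioi).2 (ae_of_all _ fun ξ hξ => rpow_nonneg (le_of_lt hξ) _))
    (integrableOn_one_sub_cos_mul_rpow (by linarith) (by linarith)) (fun _ => rfl) t c
end

section
/- For every Hurst parameter H ∈ (1/2, 1), T > 0 and every continuous function f : [0,T] → ℝ, the bilinear form value ⟨f,f⟩_H = H(2H−1) ∫_0^T ∫_0^T f(s) f(t) |t−s|^{2H−2} ds dt is nonnegative. Hence ⟨·,·⟩_H is a positive semidefinite bilinear form on continuous functions on [0,T]. -/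
/-!
For `-1 < a < -1/2` the kernel `|t - s| ^ (2a+1)` is, up to a positive constant `B`, the Gram
kernel `∫ (t - u)₊ ^ a (s - u)₊ ^ a du` of the one-sided powers: substitute
`u = s - (t - s) w` for `s < t`. Fubini then gives
`∫∫ g(s) g(t) |t - s| ^ (2a+1) ds dt = B⁻¹ ∫ (∫ g(t) (t - u)₊ ^ a dt)² du ≥ 0`,
and `2H - 2 = 2a + 1` with `a = H - 3/2`.
-/

open MeasureTheory Set Real

namespace FractionalKernel

variable {a : ℝ}

lemma integrableOn_one_add_rpow_mul_rpow (ha : -1 < a) (ha' : 2 * a < -1) :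
    IntegrableOn (fun w : ℝ => (1 + w) ^ a * w ^ a) (Ioi 0) := by
  have hcont : ContinuousOn (fun w : ℝ => (1 + w) ^ a * w ^ a) (Ioi 0) := fun w (hw : 0 < w) =>
    ((continuousAt_const.add continuousAt_id).rpow_const
      (Or.inl (by linarith : (0 : ℝ) < 1 + w).ne')).mul
        (continuousAt_id.rpow_const (Or.inl hw.ne')) |>.continuousWithinAt
  rw [← Ioc_union_Ioi_eq_Ioi zero_le_one]
  refine IntegrableOn.union ?_ ?_
  · refine Integrable.mono' (intervalIntegral.intervalIntegrable_rpow' ha (a := 0) (b := 1)).1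
      ((hcont.mono Ioc_subset_Ioi_self).aestronglyMeasurable measurableSet_Ioc) ?_
    filter_upwards [ae_restrict_mem measurableSet_Ioc] with w hw
    have hw0 : 0 < w := hw.1
    rw [norm_of_nonneg (by positivity)]
    exact mul_le_of_le_one_left (by positivity)
      (rpow_le_one_of_one_le_of_nonpos (by linarith) (by linarith))
  · refine Integrable.mono' (integrableOn_Ioi_rpow_of_lt ha' one_pos)
      ((hcont.mono (Ioi_subset_Ioi zero_le_one)).aestronglyMeasurable measurableSet_Ioi) ?_
    filter_upwards [ae_restrict_mem measurableSet_Ioi] with w (hw : 1 < w)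
    rw [norm_of_nonneg (by positivity), two_mul, rpow_add (by linarith)]
    exact mul_le_mul_of_nonneg_right
      (rpow_le_rpow_of_nonpos (by linarith) (by linarith) (by linarith)) (by positivity)

-- `B(a + 1, -2a - 1)`, a Beta-function value.
noncomputable def truncatedPowConst (a : ℝ) : ℝ := ∫ w in Ioi 0, (1 + w) ^ a * w ^ a

lemma truncatedPowConst_pos (ha : -1 < a) (ha' : 2 * a < -1) : 0 < truncatedPowConst a := by
  have hpos : ∀ w ∈ Ioi (0 : ℝ), 0 < (1 + w) ^ a * w ^ a := fun w (hw : 0 < w) => by positivity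
  rw [truncatedPowConst, setIntegral_pos_iff_support_of_nonneg_ae
    ((ae_restrict_iff' measurableSet_Ioi).2 (.of_forall fun w hw => (hpos w hw).le))
    (integrableOn_one_add_rpow_mul_rpow ha ha'),
    inter_eq_right.2 fun w hw => Function.mem_support.2 (hpos w hw).ne']
  simp

noncomputable def truncatedPow (a t u : ℝ) : ℝ := if u < t then (t - u) ^ a else 0

lemma truncatedPow_nonneg (a t u : ℝ) : 0 ≤ truncatedPow a t u := by
  unfold truncatedPow; split_ifs <;> positivity

lemma measurable_truncatedPow (a : ℝ) : Measurable fun p : ℝ × ℝ => truncatedPow a p.1 p.2 :=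
  Measurable.ite (measurableSet_lt measurable_snd measurable_fst)
    ((measurable_fst.sub measurable_snd).pow_const a) measurable_const

lemma truncatedPow_mul_truncatedPow_sub_mul {s t : ℝ} (hst : s < t) (w : ℝ) :
    truncatedPow a t (s - (t - s) * w) * truncatedPow a s (s - (t - s) * w) =
      (t - s) ^ (2 * a) * (Ioi 0).indicator (fun w => (1 + w) ^ a * w ^ a) w := by
  have hc : 0 < t - s := sub_pos.2 hst
  by_cases hw : 0 < w
  · have h1 : t - (s - (t - s) * w) = (t - s) * (1 + w) := by ring
    have h2 : s - (s - (t - s) * w) = (t - s) * w := by ring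
    rw [truncatedPow, truncatedPow, if_pos (by nlinarith), if_pos (by nlinarith), h1, h2,
      indicator_of_mem (show w ∈ Ioi 0 from hw), mul_rpow hc.le (by linarith),
      mul_rpow hc.le hw.le, two_mul, rpow_add hc]
    ring
  · rw [indicator_of_notMem (show w ∉ Ioi 0 from hw), mul_zero]
    simp only [truncatedPow]
    rw [if_neg (show ¬s - (t - s) * w < s from not_lt.2 (by nlinarith)), mul_zero]

lemma integrable_truncatedPow_mul (ha : -1 < a) (ha' : 2 * a < -1) {s t : ℝ} (hst : s < t) :
    Integrable fun u => truncatedPow a t u * truncatedPow a s u := by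
  have hc : t - s ≠ 0 := (sub_pos.2 hst).ne'
  have h := ((integrable_indicator_iff measurableSet_Ioi).2
    (integrableOn_one_add_rpow_mul_rpow ha ha')).const_mul ((t - s) ^ (2 * a))
  simp_rw [← truncatedPow_mul_truncatedPow_sub_mul hst] at h
  simpa using ((integrable_comp_mul_left_iff
    (fun v => truncatedPow a t (s - v) * truncatedPow a s (s - v)) hc).1 h).comp_sub_left s

lemma integral_truncatedPow_mul {s t : ℝ} (hst : s < t) :
    ∫ u, truncatedPow a t u * truncatedPow a s u =
      (t - s) ^ (2 * a + 1) * truncatedPowConst a := by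
  have hc : 0 < t - s := sub_pos.2 hst
  rw [← integral_sub_left_eq_self _ volume s]
  have h := Measure.integral_comp_mul_left
    (fun v => truncatedPow a t (s - v) * truncatedPow a s (s - v)) (t - s)
  simp only [truncatedPow_mul_truncatedPow_sub_mul hst, integral_const_mul,
    integral_indicator measurableSet_Ioi] at h
  rw [abs_of_pos (inv_pos.2 hc), smul_eq_mul, eq_inv_mul_iff_mul_eq₀ hc.ne'] at h
  rw [truncatedPowConst, rpow_add hc, rpow_one, ← h]
  ring

lemma integrable_and_integral_truncatedPow_mul (ha : -1 < a) (ha' : 2 * a < -1) {s t : ℝ}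
    (hst : s ≠ t) :
    Integrable (fun u => truncatedPow a s u * truncatedPow a t u) ∧
      ∫ u, truncatedPow a s u * truncatedPow a t u =
        truncatedPowConst a * |s - t| ^ (2 * a + 1) := by
  rcases hst.lt_or_gt with h | h
  · have hcomm : (fun u => truncatedPow a s u * truncatedPow a t u) =
        fun u => truncatedPow a t u * truncatedPow a s u := funext fun u => mul_comm _ _
    rw [hcomm, abs_sub_comm, abs_of_pos (sub_pos.2 h), mul_comm (truncatedPowConst a)]
    exact ⟨integrable_truncatedPow_mul ha ha' h, integral_truncatedPow_mul h⟩
  · rw [abs_of_pos (sub_pos.2 h), mul_comm (truncatedPowConst a)]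
    exact ⟨integrable_truncatedPow_mul ha ha' h, integral_truncatedPow_mul h⟩

end FractionalKernel

theorem integral_mul_mul_nonneg_of_ae_eq_integral_mul {α β : Type*} [MeasurableSpace α]
    [MeasurableSpace β] {μ : Measure α} {ν : Measure β} [SFinite μ] [SFinite ν] {φ : α → β → ℝ}
    (hφ : Measurable (Function.uncurry φ)) (hφ_nonneg : ∀ x y, 0 ≤ φ x y) {K : α → α → ℝ}
    (hK : ∀ᵐ p ∂μ.prod μ, Integrable (fun y => φ p.1 y * φ p.2 y) ν ∧
      ∫ y, φ p.1 y * φ p.2 y ∂ν = K p.1 p.2)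
    {g : α → ℝ} (hg : AEStronglyMeasurable g μ) :
    0 ≤ ∫ p, g p.1 * g p.2 * K p.1 p.2 ∂μ.prod μ := by
  by_cases hint : Integrable (fun p => g p.1 * g p.2 * K p.1 p.2) (μ.prod μ)
  swap
  · rw [integral_undef hint]
  set Ψ : α × α → β → ℝ := fun p y => g p.1 * φ p.1 y * (g p.2 * φ p.2 y)
  have hΨ_eq (p : α × α) : Ψ p = fun y => g p.1 * g p.2 * (φ p.1 y * φ p.2 y) :=
    funext fun y => by ring
  have hΨ : ∀ᵐ p ∂μ.prod μ,
      Integrable (Ψ p) ν ∧ ∫ y, Ψ p y ∂ν = g p.1 * g p.2 * K p.1 p.2 := by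
    filter_upwards [hK] with p hp
    rw [hΨ_eq, integral_const_mul, hp.2]
    exact ⟨hp.1.const_mul _, rfl⟩
  have hΨ_norm : ∀ᵐ p ∂μ.prod μ, ∫ y, ‖Ψ p y‖ ∂ν = ‖g p.1 * g p.2 * K p.1 p.2‖ := by
    filter_upwards [hK] with p hp
    have hK_nonneg : 0 ≤ K p.1 p.2 :=
      hp.2 ▸ integral_nonneg fun y => mul_nonneg (hφ_nonneg _ _) (hφ_nonneg _ _)
    simp only [hΨ_eq, norm_mul, Real.norm_of_nonneg (hφ_nonneg _ _), integral_const_mul, hp.2,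
      Real.norm_of_nonneg hK_nonneg]
  have hΨ_meas : AEStronglyMeasurable (Function.uncurry Ψ) ((μ.prod μ).prod ν) := by
    have hφ₁ : Measurable fun q : (α × α) × β => φ q.1.1 q.2 :=
      hφ.comp (measurable_fst.fst.prodMk measurable_snd)
    have hφ₂ : Measurable fun q : (α × α) × β => φ q.1.2 q.2 :=
      hφ.comp (measurable_fst.snd.prodMk measurable_snd)
    exact (hg.comp_fst.comp_fst.mul hφ₁.aestronglyMeasurable).mul
      (hg.comp_snd.comp_fst.mul hφ₂.aestronglyMeasurable)
  have hΨ_int : Integrable (Function.uncurry Ψ) ((μ.prod μ).prod ν) :=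
    (integrable_prod_iff hΨ_meas).2
      ⟨hΨ.mono fun p hp => hp.1, hint.norm.congr (hΨ_norm.mono fun p hp => hp.symm)⟩
  calc 0 ≤ ∫ y, (∫ x, g x * φ x y ∂μ) * ∫ x, g x * φ x y ∂μ ∂ν :=
        integral_nonneg fun y => mul_self_nonneg _
    _ = ∫ y, ∫ p, Ψ p y ∂μ.prod μ ∂ν :=
        integral_congr_ae (.of_forall fun y => (integral_prod_mul _ _).symm)
    _ = ∫ p, ∫ y, Ψ p y ∂ν ∂μ.prod μ := (integral_integral_swap hΨ_int).symm
    _ = ∫ p, g p.1 * g p.2 * K p.1 p.2 ∂μ.prod μ := integral_congr_ae (hΨ.mono fun p hp => hp.2)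

open FractionalKernel in
theorem integral_mul_mul_abs_sub_rpow_nonneg {μ : Measure ℝ} [SFinite μ] [NullSingletonClass μ]
    {b : ℝ} (hb : -1 < b) (hb' : b < 0) {g : ℝ → ℝ} (hg : AEStronglyMeasurable g μ) :
    0 ≤ ∫ p, g p.1 * g p.2 * |p.1 - p.2| ^ b ∂μ.prod μ := by
  set a := (b - 1) / 2
  have hab : 2 * a + 1 = b := by ring
  have hB := truncatedPowConst_pos (a := a) (by linarith) (by linarith)
  have hoff_diag : ∀ᵐ p ∂μ.prod μ, p.1 ≠ p.2 :=
    (Measure.ae_prod_iff_ae_ae (measurableSet_eq_fun measurable_fst measurable_snd).compl).2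
      (.of_forall fun x => (Measure.ae_ne μ x).mono fun y hy => hy.symm)
  have key := integral_mul_mul_nonneg_of_ae_eq_integral_mul (measurable_truncatedPow a)
    (truncatedPow_nonneg a) (K := fun s t => truncatedPowConst a * |s - t| ^ b)
    (hoff_diag.mono fun p hp => hab ▸ integrable_and_integral_truncatedPow_mul
      (by linarith) (by linarith) hp) hg
  simp only [mul_left_comm _ (truncatedPowConst a), integral_const_mul] at key
  exact (mul_nonneg_iff_of_pos_left hB).1 key

lemma integrable_abs_sub_rpow_restrict_prod {b : ℝ} (hb : -1 < b) (c d : ℝ) :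
    Integrable (fun p : ℝ × ℝ => |p.1 - p.2| ^ b)
      ((volume.restrict (Ioc c d)).prod (volume.restrict (Ioc c d))) := by
  have hloc : LocallyIntegrable fun x : ℝ => |x| ^ b :=
    locallyIntegrable_of_norm_le_rpow (by simp) (C := 1) (α := -b) (by simp; linarith)
      (.of_forall fun x => by
        simp [Real.norm_eq_abs, abs_of_nonneg (rpow_nonneg (abs_nonneg x) b)])
      (measurable_abs.pow_const b).aestronglyMeasurable
  have hker : Integrable ((Icc (c - d) (d - c)).indicator fun x : ℝ => |x| ^ b) :=
    (integrable_indicator_iff measurableSet_Icc).2 (hloc.integrableOn_isCompact isCompact_Icc)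
  have hbox : Integrable ((Ioc c d).indicator fun _ : ℝ => (1 : ℝ)) :=
    (integrable_indicator_iff measurableSet_Ioc).2 (integrableOn_const measure_Ioc_lt_top.ne)
  have h := hbox.convolution_integrand (ContinuousLinearMap.mul ℝ ℝ) hker (μ := volume)
  rw [Measure.prod_restrict, ← Measure.volume_eq_prod]
  refine (h.integrableOn (s := Ioc c d ×ˢ Ioc c d)).congr_fun (fun p ⟨hp₁, hp₂⟩ => ?_)
    (measurableSet_Ioc.prod measurableSet_Ioc)
  have hdiff : p.1 - p.2 ∈ Icc (c - d) (d - c) :=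
    ⟨by linarith [hp₁.1, hp₂.2], by linarith [hp₁.2, hp₂.1]⟩
  simp [indicator_of_mem hp₂, indicator_of_mem hdiff]

/-- For `H ∈ (1/2, 1)`, `T > 0` and every continuous `f : [0,T] → ℝ`, the bilinear form value
`⟨f,f⟩_H = H(2H-1) ∫_0^T ∫_0^T f(s) f(t) |t-s|^(2H-2) ds dt` is nonnegative, so `⟨·,·⟩_H`
is a positive semidefinite bilinear form on continuous functions on `[0,T]`. -/
theorem fBm_inner_product_nonneg
    (H T : ℝ) (hH : H ∈ Set.Ioo (1 / 2 : ℝ) 1) (hT : 0 < T)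
    (f : ℝ → ℝ) (hf : ContinuousOn f (Set.Icc 0 T)) :
    0 ≤ H * (2 * H - 1) * ∫ t in (0:ℝ)..T, ∫ s in (0:ℝ)..T, f s * f t * |t - s| ^ (2 * H - 2) := by
  obtain ⟨hH₁, hH₂⟩ := hH
  set μ := volume.restrict (Ioc (0 : ℝ) T)
  obtain ⟨C, hC⟩ := isCompact_Icc.exists_bound_of_continuousOn hf
  have hfμ : AEStronglyMeasurable f μ :=
    (hf.mono Ioc_subset_Icc_self).aestronglyMeasurable measurableSet_Ioc
  have hbound : ∀ᵐ p ∂μ.prod μ, ‖f p.2 * f p.1‖ ≤ C * C := by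
    rw [Measure.prod_restrict]
    filter_upwards [ae_restrict_mem (measurableSet_Ioc.prod measurableSet_Ioc)] with p ⟨hp₁, hp₂⟩
    rw [norm_mul]
    exact mul_le_mul (hC _ (Ioc_subset_Icc_self hp₂)) (hC _ (Ioc_subset_Icc_self hp₁))
      (norm_nonneg _) ((norm_nonneg _).trans (hC _ (Ioc_subset_Icc_self hp₁)))
  have hint :
      Integrable (fun p : ℝ × ℝ => f p.2 * f p.1 * |p.1 - p.2| ^ (2 * H - 2)) (μ.prod μ) :=
    (integrable_abs_sub_rpow_restrict_prod (by linarith) 0 T).bdd_mul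
      (hfμ.comp_snd.mul hfμ.comp_fst) hbound
  simp only [intervalIntegral.integral_of_le hT.le]
  rw [← integral_prod _ hint]
  refine mul_nonneg (by nlinarith) ?_
  calc 0 ≤ ∫ p, f p.1 * f p.2 * |p.1 - p.2| ^ (2 * H - 2) ∂μ.prod μ :=
        integral_mul_mul_abs_sub_rpow_nonneg (by linarith) (by linarith) hfμ
    _ = ∫ p, f p.2 * f p.1 * |p.1 - p.2| ^ (2 * H - 2) ∂μ.prod μ := by
        congr 1 with p
        ring
end

section
/- Let E be a real Banach space, T > 0, k a positive natural number, f : ℝ × E → E continuously differentiable with ‖f(t,x)‖ + ‖∂_t f(t,x)‖ ≤ φ(t)(1 + ‖x‖) and ‖∂_x f(t,x) v‖² ≤ φ(t)² (1 + ‖x‖² + ‖v‖²) for a continuous φ : [0,T] → ℝ, and let a ↦ w_a ∈ C([0,T], E) be continuously differentiable with w_0 = 0. Then for every x₀ ∈ E there exist an open neighborhood U of (0, x₀) in ℝ × E and a continuously differentiable map G : U → C([0,T], E) such that for every (a, x) ∈ U the function Y(t) := x + G(a,x)(t) satisfies the integral equation Y(t) = x + ∫_0^t a^k f(a^k s, Y(s))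 ds + w_a(t) for all t ∈ [0,T]. In particular, the solution of the rescaled equation exists for all sufficiently small a and depends continuously differentiably on the initial condition x. -/
/-!
On `(ℝ × E) × C([0, T], E)` consider `F((a, x), X) = X - ∫₀^· a^k f(a^k s, x + X s) ds - w a`.
Over the compact interval, the superposition operator `u ↦ f ∘ u` of a `C¹` map `f` is `C¹` on
continuous functions, with derivative `h ↦ Df(u ·)(h ·)`: the mean value inequality bounds the
remainder pointwise, uniformly because `u ↦ Df ∘ u` is continuous. Hence `F` is `C¹`. At `a = 0`
both the integral (as `k > 0`) and `w 0` vanish, so `F((0, x), X) = X` and `∂_X F` is the identity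
there; the implicit function theorem then yields the `C¹` solution map.
-/

open Set

namespace ContinuousMap

variable {α : Type*} [TopologicalSpace α] [CompactSpace α]
  {F G : Type*} [NormedAddCommGroup F] [NormedSpace ℝ F] [NormedAddCommGroup G] [NormedSpace ℝ G]

noncomputable def pointwiseApply : C(α, F →L[ℝ] G) →L[ℝ] C(α, F) →L[ℝ] C(α, G) :=
  LinearMap.mkContinuous₂
    (LinearMap.mk₂ ℝ (fun (A : C(α, F →L[ℝ] G)) (h : C(α, F)) =>
        (⟨fun x => A x (h x), by fun_prop⟩ : C(α, G)))
      (fun _ _ _ => by ext; simp) (fun _ _ _ => by ext; simp)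
      (fun _ _ _ => by ext; simp) (fun _ _ _ => by ext; simp))
    1 fun A h => by
      rw [one_mul, ContinuousMap.norm_le _ (by positivity)]
      intro x
      exact (A x).le_opNorm_of_le (h.norm_coe_le_norm x) |>.trans
        (mul_le_mul_of_nonneg_right (A.norm_coe_le_norm x) (norm_nonneg _))

@[simp]
theorem pointwiseApply_apply (A : C(α, F →L[ℝ] G)) (h : C(α, F)) (x : α) :
    pointwiseApply A h x = A x (h x) := rfl

theorem hasFDerivAt_postcomp {g : C(F, G)} {g' : C(F, F →L[ℝ] G)}
    (hg : ∀ y, HasFDerivAt g (g' y) y) (u : C(α, F)) :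
    HasFDerivAt g.comp (pointwiseApply (g'.comp u)) u := by
  refine .of_isLittleO <| Asymptotics.isLittleO_iff.mpr fun ε hε => ?_
  have hcont : ContinuousAt (g'.comp : C(α, F) → C(α, F →L[ℝ] G)) u :=
    (continuous_postcomp g').continuousAt
  obtain ⟨δ, hδ, hclose⟩ :=
    (Metric.continuousAt_iff (α := C(α, F)) (β := C(α, F →L[ℝ] G))).mp hcont ε hε
  filter_upwards [Metric.ball_mem_nhds u hδ] with v hv
  rw [ContinuousMap.norm_le _ (by positivity)]
  intro x
  -- apply `hclose` to `u` shifted by the constant `y - u x`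
  have hball : ∀ y ∈ Metric.ball (u x) δ, ‖g' y - g' (u x)‖ ≤ ε := fun y hy => by
    have hshift : dist (u + const α (y - u x)) u < δ := by
      rw [dist_eq_norm, add_sub_cancel_left]
      exact (norm_lt_iff _ hδ).mpr fun _ => by simpa [← dist_eq_norm] using hy
    simpa [dist_eq_norm] using (hclose hshift).le.trans' ((g'.comp _).dist_apply_le_dist x)
  calc ‖g (v x) - g (u x) - g' (u x) (v x - u x)‖
      ≤ ε * ‖v x - u x‖ :=
        (convex_ball (u x) δ).norm_image_sub_le_of_norm_hasFDerivWithin_le'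
          (fun y _ => (hg y).hasFDerivWithinAt) hball (Metric.mem_ball_self hδ)
          (((v.dist_apply_le_dist x).trans_lt hv))
    _ ≤ ε * ‖v - u‖ := by gcongr; exact (v - u).norm_coe_le_norm x

theorem contDiff_postcomp {g : C(F, G)} (hg : ContDiff ℝ 1 g) :
    ContDiff ℝ 1 (g.comp : C(α, F) → C(α, G)) := by
  let g' : C(F, F →L[ℝ] G) := ⟨fderiv ℝ g, hg.continuous_fderiv one_ne_zero⟩
  have hderiv (u : C(α, F)) := hasFDerivAt_postcomp (g' := g')
    (fun y => (hg.differentiable one_ne_zero y).hasFDerivAt) u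
  rw [contDiff_one_iff_fderiv]
  refine ⟨fun u => (hderiv u).differentiableAt, ?_⟩
  rw [funext fun u => (hderiv u).fderiv]
  exact pointwiseApply.continuous.comp (continuous_postcomp g')

end ContinuousMap

section IntervalPrimitive

variable {E : Type*} [NormedAddCommGroup E] [NormedSpace ℝ E] {a b : ℝ}

noncomputable def intervalPrimitive (hab : a ≤ b) : C(Icc a b, E) →L[ℝ] C(Icc a b, E) :=
  LinearMap.mkContinuous
    { toFun u := ⟨fun t => ∫ s in a..(t : ℝ), u (projIcc a b hab s),
        (intervalIntegral.continuous_primitive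
          (fun _ _ => (u.continuous.comp continuous_projIcc).intervalIntegrable _ _) a).comp
          continuous_subtype_val⟩
      map_add' u v := ContinuousMap.ext fun t => intervalIntegral.integral_add
        ((u.continuous.comp continuous_projIcc).intervalIntegrable _ _)
        ((v.continuous.comp continuous_projIcc).intervalIntegrable _ _)
      map_smul' c u := ContinuousMap.ext fun t => intervalIntegral.integral_smul c _ }
    (b - a) fun u => by
      rw [ContinuousMap.norm_le _ (by nlinarith [norm_nonneg u])]
      intro t
      calc ‖∫ s in a..(t : ℝ), u (projIcc a b hab s)‖ ≤ ‖u‖ * |(t : ℝ) - a| :=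
            intervalIntegral.norm_integral_le_of_norm_le_const fun _ _ => u.norm_coe_le_norm _
        _ ≤ (b - a) * ‖u‖ := by
            rw [abs_of_nonneg (sub_nonneg.mpr t.2.1), mul_comm]
            gcongr
            exact t.2.2

theorem intervalPrimitive_apply (hab : a ≤ b) (u : C(Icc a b, E)) (t : Icc a b) :
    intervalPrimitive hab u t = ∫ s in a..(t : ℝ), u (projIcc a b hab s) := rfl

end IntervalPrimitive

theorem fderiv_comp_inr_eq {𝕜 : Type*} [NontriviallyNormedField 𝕜]
    {E₁ E₂ F : Type*} [NormedAddCommGroup E₁] [NormedSpace 𝕜 E₁] [NormedAddCommGroup E₂]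
    [NormedSpace 𝕜 E₂] [NormedAddCommGroup F] [NormedSpace 𝕜 F]
    {f : E₁ × E₂ → F} {u : E₁ × E₂} {L : E₂ →L[𝕜] F} (hf : DifferentiableAt 𝕜 f u)
    (hL : HasFDerivAt (fun y => f (u.1, y)) L u.2) :
    fderiv 𝕜 f u ∘L .inr 𝕜 E₁ E₂ = L :=
  (hf.hasFDerivAt.comp u.2 (hasFDerivAt_prodMk_right u.1 u.2)).unique hL

section RescaledEquation

variable {E : Type*} [NormedAddCommGroup E] [NormedSpace ℝ E] {T : ℝ}

noncomputable def rescaledCurve (k : ℕ) (z : (ℝ × E) × C(Icc (0 : ℝ) T, E)) :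
    C(Icc (0 : ℝ) T, ℝ × E) :=
  z.1.1 ^ k • (⟨fun t => ((t : ℝ), 0), by fun_prop⟩ : C(Icc (0 : ℝ) T, ℝ × E)) +
    (ContinuousLinearMap.inr ℝ ℝ E).compLeftContinuous ℝ _
      (ContinuousLinearMap.const ℝ _ z.1.2 + z.2)

@[simp]
theorem rescaledCurve_apply (k : ℕ) (z : (ℝ × E) × C(Icc (0 : ℝ) T, E)) (t : Icc (0 : ℝ) T) :
    rescaledCurve k z t = (z.1.1 ^ k * t, z.1.2 + z.2 t) := by
  simp [rescaledCurve]

theorem contDiff_rescaledCurve (k : ℕ) :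
    ContDiff ℝ 1 (rescaledCurve k : (ℝ × E) × C(Icc (0 : ℝ) T, E) → _) := by
  unfold rescaledCurve
  fun_prop

noncomputable def rescaledResidual (hT : 0 ≤ T) (k : ℕ) (f : C(ℝ × E, E))
    (w : ℝ → C(Icc (0 : ℝ) T, E)) (z : (ℝ × E) × C(Icc (0 : ℝ) T, E)) : C(Icc (0 : ℝ) T, E) :=
  z.2 - intervalPrimitive hT (z.1.1 ^ k • f.comp (rescaledCurve k z)) - w z.1.1

variable (hT : 0 ≤ T) (k : ℕ) (f : C(ℝ × E, E)) (w : ℝ → C(Icc (0 : ℝ) T, E))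

theorem contDiff_rescaledResidual (hf : ContDiff ℝ 1 f) (hw : ContDiff ℝ 1 w) :
    ContDiff ℝ 1 (rescaledResidual hT k f w) := by
  have hf_curve :
      ContDiff ℝ 1 fun z : (ℝ × E) × C(Icc (0 : ℝ) T, E) => f.comp (rescaledCurve k z) :=
    (ContinuousMap.contDiff_postcomp hf).comp (contDiff_rescaledCurve k)
  unfold rescaledResidual
  fun_prop

theorem rescaledResidual_zero (hk : 0 < k) (hw0 : w 0 = 0) (x : E) (X : C(Icc (0 : ℝ) T, E)) :
    rescaledResidual hT k f w ((0, x), X) = X := by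
  simp [rescaledResidual, zero_pow hk.ne', hw0]

theorem rescaledResidual_eq_zero_iff (p : ℝ × E) (X : C(Icc (0 : ℝ) T, E)) :
    rescaledResidual hT k f w (p, X) = 0 ↔ ∀ t : Icc (0 : ℝ) T, p.2 + X t
      = p.2 + (∫ s in (0 : ℝ)..(t : ℝ), p.1 ^ k • f (p.1 ^ k * s, p.2 + X (projIcc 0 T hT s)))
        + w p.1 t := by
  rw [ContinuousMap.ext_iff]
  refine forall_congr' fun t => ?_
  have hintegral : intervalPrimitive hT (p.1 ^ k • f.comp (rescaledCurve k (p, X))) t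
      = ∫ s in (0 : ℝ)..(t : ℝ), p.1 ^ k • f (p.1 ^ k * s, p.2 + X (projIcc 0 T hT s)) := by
    refine intervalIntegral.integral_congr fun s hs => ?_
    rw [uIcc_of_le t.2.1] at hs
    simp [projIcc_of_mem hT ⟨hs.1, hs.2.trans t.2.2⟩]
  simp only [rescaledResidual, ContinuousMap.sub_apply, hintegral, ContinuousMap.zero_apply]
  rw [add_assoc, add_right_inj, sub_sub, sub_eq_zero]

theorem fderiv_rescaledResidual_comp_inr (hf : ContDiff ℝ 1 f) (hw : ContDiff ℝ 1 w) (hk : 0 < k)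
    (hw0 : w 0 = 0) (x : E) (X : C(Icc (0 : ℝ) T, E)) :
    fderiv ℝ (rescaledResidual hT k f w) ((0, x), X) ∘L .inr ℝ _ _ = .id ℝ _ := by
  refine fderiv_comp_inr_eq ((contDiff_rescaledResidual hT k f w hf hw).differentiable
    one_ne_zero _) ?_
  simp only [rescaledResidual_zero hT k f w hk hw0]
  exact hasFDerivAt_id X

end RescaledEquation

theorem rescaled_equation_local_solution_via_IFT_general
    (E : Type*) [NormedAddCommGroup E] [NormedSpace ℝ E] [CompleteSpace E]
    (T : ℝ) (hT : 0 < T) (k : ℕ) (hk : 0 < k)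
    (f : ℝ × E → E) (hf : ContDiff ℝ 1 f)
    (w : ℝ → C(Set.Icc (0:ℝ) T, E)) (hw : ContDiff ℝ 1 w) (hw0 : w 0 = 0) :
    ∀ x₀ : E, ∃ U : Set (ℝ × E), IsOpen U ∧ (0, x₀) ∈ U ∧
      ∃ G : ℝ × E → C(Set.Icc (0:ℝ) T, E), ContDiffOn ℝ 1 G U ∧
        ∀ p ∈ U, ∀ t : Set.Icc (0:ℝ) T,
          p.2 + G p t
            = p.2 + (∫ s in (0:ℝ)..(t:ℝ),
                p.1 ^ k • f (p.1 ^ k * s, p.2 + G p (Set.projIcc 0 T hT.le s)))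
              + w p.1 t := by
  intro x₀
  let f' : C(ℝ × E, E) := ⟨f, hf.continuous⟩
  have hF : ContDiffAt ℝ 1 (rescaledResidual hT.le k f' w) ((0, x₀), 0) :=
    (contDiff_rescaledResidual hT.le k f' w hf hw).contDiffAt
  have hinv :
      (fderiv ℝ (rescaledResidual hT.le k f' w) ((0, x₀), 0) ∘L .inr ℝ _ _).IsInvertible := by
    rw [fderiv_rescaledResidual_comp_inr hT.le k f' w hf hw hk hw0]
    exact ⟨.refl ℝ _, rfl⟩
  obtain ⟨U, hU, hUo, hx₀U⟩ := eventually_nhds_iff.mp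
    (((hF.contDiffAt_implicitFunction one_ne_zero hinv).eventually (by simp)).and
      (hF.eventually_apply_implicitFunction one_ne_zero hinv))
  refine ⟨U, hUo, hx₀U, hF.implicitFunction one_ne_zero hinv,
    fun p hp => (hU p hp).1.contDiffWithinAt, fun p hp => ?_⟩
  refine (rescaledResidual_eq_zero_iff hT.le k f' w p _).mp ?_
  rw [(hU p hp).2, rescaledResidual_zero hT.le k f' w hk hw0]

/-- The implicit-function-theorem step: under the paper's growth hypotheses on a `C¹` map
`f : ℝ × E → E` and with a `C¹` forcing curve `a ↦ w a ∈ C([0,T],E)` with `w 0 = 0`, for every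
`x₀ ∈ E` there are an open neighborhood `U` of `(0, x₀)` in `ℝ × E` and a `C¹` map
`G : U → C([0,T],E)` such that for each `(a,x) ∈ U` the function `Y(t) = x + G(a,x)(t)`
satisfies `Y(t) = x + ∫_0^t a^k f(a^k s, Y(s)) ds + w_a(t)` on `[0,T]`. -/
theorem rescaled_equation_local_solution_via_IFT
    (E : Type*) [NormedAddCommGroup E] [NormedSpace ℝ E] [CompleteSpace E]
    (T : ℝ) (hT : 0 < T) (k : ℕ) (hk : 0 < k)
    (f : ℝ × E → E) (hf : ContDiff ℝ 1 f)
    (φ : ℝ → ℝ) (hφ : ContinuousOn φ (Set.Icc 0 T))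
    (hgrowth : ∀ t ∈ Set.Icc (0:ℝ) T, ∀ x : E,
      ‖f (t, x)‖ + ‖fderiv ℝ f (t, x) (1, 0)‖ ≤ φ t * (1 + ‖x‖))
    (hgrowth' : ∀ t ∈ Set.Icc (0:ℝ) T, ∀ x v : E,
      ‖fderiv ℝ f (t, x) (0, v)‖ ^ 2 ≤ (φ t) ^ 2 * (1 + ‖x‖ ^ 2 + ‖v‖ ^ 2))
    (w : ℝ → C(Set.Icc (0:ℝ) T, E)) (hw : ContDiff ℝ 1 w) (hw0 : w 0 = 0) :
    ∀ x₀ : E, ∃ U : Set (ℝ × E), IsOpen U ∧ (0, x₀) ∈ U ∧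
      ∃ G : ℝ × E → C(Set.Icc (0:ℝ) T, E), ContDiffOn ℝ 1 G U ∧
        ∀ p ∈ U, ∀ t : Set.Icc (0:ℝ) T,
          p.2 + G p t
            = p.2 + (∫ s in (0:ℝ)..(t:ℝ),
                p.1 ^ k • f (p.1 ^ k * s, p.2 + G p (Set.projIcc 0 T hT.le s)))
              + w p.1 t :=
  rescaled_equation_local_solution_via_IFT_general E T hT k hk f hf w hw hw0
end
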